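/- arXiv:1801.07854 — 3 statements merged into one kernel-verified Lean document; each statement's English description precedes it below -/
import Mathlib

section
/- Let k ≥ 3 and n ≥ 1 be integers. If G is a balanced k-partite graph of order p = kn with at least ((k² − k)n² − 2n(k − 1) + 4)/2 edges, then G is hamiltonian. (Note that ((k² − k)n² − 2n(k − 1) + 4)/2 equals the number of edges of the complete balanced k-partite graph K_k(n) minus ((k − 1)n − 2).) -/
/-!
Chvátal closure: it suffices that every supergraph `H ≠ ⊤` of `G` has two non-adjacent vertices
whose degrees sum to at least `N = kn`: if `H + uv` is Hamiltonian for such a pair, so is `H`, by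
Ore's crossing argument on the Hamilton `u`–`v` path left when the new edge is removed.

`G` misses at most `r - 2` edges of the `r`-regular graph `K_k(n)`, `r = (k - 1)n`. Let `F` be the
graph of missing edges, so `deg_H w + deg_F w ≥ r`. Suppose all non-adjacent pairs of `H` have
degree sum `< N` and let `u` have minimum `H`-degree. If `u` lies on every non-edge, a
non-neighbour of `u` is adjacent to everything else, forcing `deg_H u ≤ 1` and
`deg_F u ≥ r - 1 > |E(F)|`. Otherwise take a non-edge `ab` avoiding `u` with `deg a ≤ deg b`.
As `deg_F u + deg_F a ≤ |E(F)| + 1`, we get `2 deg a > r`; with `2N ≤ 3r` each of the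
`N - 1 - deg a` non-neighbours of `a` then misses at least two edges, and the missing degrees add
up to more than `2|E(F)|`.
-/

open Finset

namespace SimpleGraph

section

variable {V : Type*} {G : SimpleGraph V} {u v : V}

theorem Walk.mem_edgeSet_of_mem_edges_of_ne {x y : V} {p : (G ⊔ edge u v).Walk x y}
    {e : Sym2 V} (he : e ∈ p.edges) (hne : e ≠ s(u, v)) : e ∈ G.edgeSet := by
  have := p.edges_subset_edgeSet he
  rw [edgeSet_sup] at this
  exact this.resolve_right fun h ↦ hne (edgeSet_edge_subset h)

variable [DecidableEq V]

theorem Walk.isHamiltonian_ofSupport {l : List V} (hne : l ≠ []) (hl : l.IsChain G.Adj)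
    (hnodup : l.Nodup) (hmem : ∀ w, w ∈ l) : (Walk.ofSupport l hne hl).IsHamiltonian := by
  intro w
  rw [Walk.support_ofSupport]
  exact List.count_eq_one_of_mem hnodup (hmem w)

variable [Fintype V]

theorem Walk.IsHamiltonian.isHamiltonian_of_adj {p : G.Walk u v} (hp : p.IsHamiltonian)
    (hvu : G.Adj v u) (hV : 3 ≤ Fintype.card V) : G.IsHamiltonian := by
  refine fun _ ↦ ⟨v, .cons hvu p, ?_⟩
  rw [Walk.isHamiltonianCycle_iff_isCycle_and_support_count_tail_eq_one]
  refine ⟨(Walk.cons_isCycle_iff p hvu).mpr ⟨hp.isPath, fun h ↦ ?_⟩, hp⟩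
  have := hp.isPath.length_eq_one_of_mem_edges (Sym2.eq_swap ▸ h)
  have := hp.length_eq
  omega

/-- Reversing the part of `p` after position `i` gives a Hamilton path from `u` to `pᵢ₊₁`. -/
theorem Walk.IsHamiltonian.isHamiltonian_of_adj_adj {p : G.Walk u v} (hp : p.IsHamiltonian)
    (hV : 3 ≤ Fintype.card V) {i : ℕ} (hi : i < p.length) (hu : G.Adj u (p.getVert (i + 1)))
    (hv : G.Adj v (p.getVert i)) : G.IsHamiltonian := by
  have hlen : p.support.length = p.length + 1 := p.length_support
  rw [p.getVert_eq_support_getElem hi.le] at hv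
  rw [p.getVert_eq_support_getElem hi] at hu
  set a := p.support.take (i + 1)
  set b := p.support.drop (i + 1)
  have ha_last : a.getLast? = some p.support[i] := by simp [a, List.getLast?_take, hlen]
  have hb_head : b.head? = some p.support[i + 1] := by simp [b]
  have hb_last : b.getLast? = some v := by simp [b, List.getLast?_eq_some_getLast, hi]
  have ha_head : a.head? = some u := by simp [a, List.head?_eq_some_head, List.head_take]
  have hne : a ++ b.reverse ≠ [] := by simp [a]
  have hchain : (a ++ b.reverse).IsChain G.Adj := by
    refine List.isChain_append.mpr ⟨p.isChain_adj_support.take _,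
      List.isChain_reverse.mpr ((p.isChain_adj_support.drop _).imp fun _ _ h ↦ h.symm), ?_⟩
    simp only [ha_last, List.head?_reverse, hb_last, Option.mem_def, Option.some.injEq]
    rintro _ rfl _ rfl
    exact hv.symm
  have hperm : (a ++ b.reverse).Perm p.support :=
    ((List.reverse_perm b).append_left a).trans (by rw [List.take_append_drop])
  refine (Walk.isHamiltonian_ofSupport hne hchain (hperm.nodup_iff.mpr hp.isPath.support_nodup)
    fun w ↦ hperm.mem_iff.mpr (hp.mem_support w)).isHamiltonian_of_adj ?_ hV
  rw [List.getLast_append_of_ne_nil _ (by simp [b]; omega),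
    List.head_append_of_ne_nil (by simp [a]), List.getLast_reverse,
    (List.head_eq_iff_head?_eq_some _).mpr hb_head, (List.head_eq_iff_head?_eq_some _).mpr ha_head]
  exact hu.symm

theorem Walk.IsHamiltonian.exists_adj_adj [DecidableRel G.Adj] {p : G.Walk u v}
    (hp : p.IsHamiltonian) (hdeg : Fintype.card V ≤ G.degree u + G.degree v) :
    ∃ i < p.length, G.Adj u (p.getVert (i + 1)) ∧ G.Adj v (p.getVert i) := by
  have hindex (w : V) : ∃ j ≤ p.length, p.getVert j = w := by
    obtain ⟨j, hj, hjw⟩ := p.mem_support_iff_exists_getVert.mp (hp.mem_support w)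
    exact ⟨j, hjw, hj⟩
  set S := {i ∈ range p.length | G.Adj u (p.getVert (i + 1))}
  set T := {i ∈ range p.length | G.Adj v (p.getVert i)}
  have hS : G.degree u ≤ #S := by
    rw [← card_neighborFinset_eq_degree]
    refine (card_le_card fun w hw ↦ ?_).trans (card_image_le (f := fun i ↦ p.getVert (i + 1)))
    obtain ⟨j, hj, rfl⟩ := hindex w
    have hj0 : j ≠ 0 := by rintro rfl; simp at hw
    refine mem_image.mpr ⟨j - 1, mem_filter.mpr ⟨mem_range.mpr (by omega), ?_⟩, ?_⟩ <;>
      rw [Nat.sub_add_cancel (Nat.pos_of_ne_zero hj0)]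
    exact (mem_neighborFinset _ _ _).mp hw
  have hT : G.degree v ≤ #T := by
    rw [← card_neighborFinset_eq_degree]
    refine (card_le_card fun w hw ↦ ?_).trans (card_image_le (f := fun i ↦ p.getVert i))
    obtain ⟨j, hj, rfl⟩ := hindex w
    have hjl : j ≠ p.length := by rintro rfl; simp at hw
    exact mem_image.mpr ⟨j, mem_filter.mpr ⟨mem_range.mpr (by omega),
      (mem_neighborFinset _ _ _).mp hw⟩, rfl⟩
  have hlen := hp.length_eq
  have hV : 0 < Fintype.card V := Fintype.card_pos_iff.mpr ⟨u⟩
  have hcard : #(range p.length) < #S + #T := by rw [card_range]; omega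
  obtain ⟨i, hi⟩ := inter_nonempty_of_card_lt_card_add_card (filter_subset _ _)
    (filter_subset _ _) hcard
  simp only [mem_inter, mem_filter, mem_range] at hi
  exact ⟨i, hi.1.1, hi.1.2, hi.2.2⟩

theorem Walk.IsHamiltonian.isHamiltonian_of_card_le_degree_add [DecidableRel G.Adj]
    {p : G.Walk u v} (hp : p.IsHamiltonian) (hV : 3 ≤ Fintype.card V)
    (hdeg : Fintype.card V ≤ G.degree u + G.degree v) : G.IsHamiltonian :=
  let ⟨_, hi, hu, hv⟩ := hp.exists_adj_adj hdeg
  hp.isHamiltonian_of_adj_adj hV hi hu hv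

theorem isHamiltonian_top (hV : 3 ≤ Fintype.card V) : (⊤ : SimpleGraph V).IsHamiltonian := by
  have hne : (univ : Finset V).toList ≠ [] := by
    rw [Ne, toList_eq_nil, ← card_eq_zero, card_univ]; omega
  have hchain : (univ : Finset V).toList.IsChain (⊤ : SimpleGraph V).Adj :=
    (nodup_toList _).isChain
  refine (Walk.isHamiltonian_ofSupport hne hchain (nodup_toList _) (by simp))
    |>.isHamiltonian_of_card_le_degree_add hV ?_
  simp only [IsRegularOfDegree.top.degree_eq]
  omega

theorem IsHamiltonian.of_sup_edge [DecidableRel G.Adj] (hV : 3 ≤ Fintype.card V)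
    (hdeg : Fintype.card V ≤ G.degree u + G.degree v) (h : (G ⊔ edge u v).IsHamiltonian) :
    G.IsHamiltonian := by
  have : Nontrivial V := Fintype.one_lt_card_iff_nontrivial.mp (by omega)
  obtain ⟨C, hC⟩ := h.exists_isHamiltonianCycle u
  by_cases he : s(u, v) ∈ C.edges
  · -- rotate the cycle so that it leaves `u` along the new edge; the rest is a path in `G`
    obtain ⟨C', hC', hsnd, hverts⟩ :=
      hC.isCycle.exists_isCycle_snd_verts_eq (Walk.adj_toSubgraph_iff_mem_edges.mpr he)
    cases C' with
    | nil => exact absurd hC' Walk.not_isCycle_nil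
    | cons hadj q =>
      simp only [Walk.snd_cons] at hsnd
      subst hsnd
      obtain ⟨hq, hnot⟩ := (Walk.cons_isCycle_iff q hadj).mp hC'
      have hqG (e) (he : e ∈ q.edges) : e ∈ G.edgeSet :=
        Walk.mem_edgeSet_of_mem_edges_of_ne he fun h ↦ hnot (h ▸ he)
      have hmem (w : V) : w ∈ (q.transfer G hqG).support := by
        have : w ∈ (Walk.cons hadj q).support := by
          rw [← Walk.mem_verts_toSubgraph, hverts, Walk.mem_verts_toSubgraph]
          exact hC.mem_support w
        rw [Walk.support_transfer]
        rcases List.mem_cons.mp (Walk.support_cons hadj q ▸ this) with rfl | h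
        · exact q.end_mem_support
        · exact h
      exact ((hq.transfer hqG).isHamiltonian_of_mem hmem).isHamiltonian_of_card_le_degree_add hV
        (by omega)
  · have hCG (e) (h : e ∈ C.edges) : e ∈ G.edgeSet :=
      Walk.mem_edgeSet_of_mem_edges_of_ne h fun h' ↦ he (h' ▸ h)
    refine fun _ ↦ ⟨u, C.transfer G hCG, ?_⟩
    rw [Walk.isHamiltonianCycle_iff_isCycle_and_length_eq, Walk.length_transfer]
    exact ⟨hC.isCycle.transfer hCG, hC.length_eq⟩

theorem isHamiltonian_of_forall_exists_not_adj (hV : 3 ≤ Fintype.card V)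
    (h : ∀ (H : SimpleGraph V) [DecidableRel H.Adj], G ≤ H → H ≠ ⊤ →
      ∃ u v, u ≠ v ∧ ¬H.Adj u v ∧ Fintype.card V ≤ H.degree u + H.degree v) :
    G.IsHamiltonian := by
  classical
  suffices ∀ H, G ≤ H → H.IsHamiltonian from this G le_rfl
  intro H
  induction H using WellFoundedGT.induction with
  | _ H ih =>
  intro hGH
  by_cases hH : H = ⊤
  · exact hH ▸ isHamiltonian_top hV
  obtain ⟨u, v, huv, hnadj, hdeg⟩ := h H hGH hH
  have hlt : H < H ⊔ edge u v :=
    left_lt_sup.mpr fun hle ↦ hnadj (hle ((edge_adj ..).mpr ⟨Or.inl ⟨rfl, rfl⟩, huv⟩))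
  exact (ih _ hlt (hGH.trans hlt.le)).of_sup_edge hV hdeg

theorem degree_add_degree_le_card_edgeFinset_add_one (F : SimpleGraph V) [DecidableRel F.Adj]
    {a b : V} (hab : a ≠ b) : F.degree a + F.degree b ≤ #F.edgeFinset + 1 := by
  rw [← card_incidenceFinset_eq_degree, ← card_incidenceFinset_eq_degree,
    ← card_union_add_card_inter]
  refine add_le_add (card_le_card (union_subset (F.incidenceFinset_subset a)
    (F.incidenceFinset_subset b))) (card_le_one.mpr fun e he e' he' ↦ ?_)
  simp only [mem_inter, mem_incidenceFinset] at he he'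
  rw [(Sym2.mem_and_mem_iff hab).mp ⟨he.1.2, he.2.2⟩,
    (Sym2.mem_and_mem_iff hab).mp ⟨he'.1.2, he'.2.2⟩]

theorem degree_sdiff_add_degree {G K : SimpleGraph V} [DecidableRel G.Adj] [DecidableRel K.Adj]
    (hGK : G ≤ K) (w : V) : (K \ G).degree w + G.degree w = K.degree w := by
  simp only [← card_neighborFinset_eq_degree, neighborFinset_sdiff]
  exact card_sdiff_add_card_eq_card fun x hx ↦ (mem_neighborFinset _ _ _).mpr
    (hGK ((mem_neighborFinset _ _ _).mp hx))

section MissingEdges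

variable (H F : SimpleGraph V) [DecidableRel H.Adj] [DecidableRel F.Adj] {r : ℕ}

theorem exists_not_adj_card_le_degree_add_of_min (hr : 2 * Fintype.card V ≤ 3 * r)
    (hF : #F.edgeFinset + 2 ≤ r) (hHF : ∀ w, r ≤ H.degree w + F.degree w)
    {u a b : V} (hu : ∀ w, H.degree u ≤ H.degree w) (hab : a ≠ b) (hnadj : ¬H.Adj a b)
    (hau : a ≠ u) (hdeg : H.degree a ≤ H.degree b) :
    ∃ x y, x ≠ y ∧ ¬H.Adj x y ∧ Fintype.card V ≤ H.degree x + H.degree y := by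
  by_contra! hstuck
  have hpair := F.degree_add_degree_le_card_edgeFinset_add_one hau
  have hab_deg := hstuck a b hab hnadj
  have hua := hu a
  have hHFa := hHF a
  have hHFu := hHF u
  set T := Hᶜ.neighborFinset a
  have hT : #T = Fintype.card V - 1 - H.degree a := by
    rw [card_neighborFinset_eq_degree, degree_compl]
  have hTF (w) (hw : w ∈ T.erase u) : 2 ≤ F.degree w := by
    rw [mem_erase, mem_neighborFinset, compl_adj] at hw
    have := hstuck a w hw.2.1 hw.2.2
    have := hHF w
    omega
  have haT : a ∉ T.erase u := by simp [T]
  have huT : u ∉ insert a (T.erase u) := by simp [Ne.symm hau]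
  have hsum : ∑ w ∈ insert u (insert a (T.erase u)), F.degree w ≤ 2 * #F.edgeFinset :=
    F.sum_degrees_eq_twice_card_edges ▸ sum_le_sum_of_subset (subset_univ _)
  rw [sum_insert huT, sum_insert haT] at hsum
  have hTsum := card_nsmul_le_sum _ _ _ hTF
  have := pred_card_le_card_erase (s := T) (a := u)
  rw [smul_eq_mul] at hTsum
  omega

theorem exists_not_adj_card_le_degree_add (hr : 2 * Fintype.card V ≤ 3 * r)
    (hF : #F.edgeFinset + 2 ≤ r) (hHF : ∀ w, r ≤ H.degree w + F.degree w) (hH : H ≠ ⊤) :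
    ∃ u v, u ≠ v ∧ ¬H.Adj u v ∧ Fintype.card V ≤ H.degree u + H.degree v := by
  by_contra! hstuck
  obtain ⟨a, b, hab, hnadj⟩ : ∃ a b, a ≠ b ∧ ¬H.Adj a b := by
    by_contra! h
    exact hH (eq_top_iff.mpr fun a b hab ↦ h a b hab)
  obtain ⟨u, -, hu⟩ := exists_min_image univ (H.degree ·) ⟨a, mem_univ a⟩
  by_cases hB : ∃ a b, a ≠ b ∧ ¬H.Adj a b ∧ a ≠ u ∧ b ≠ u
  · obtain ⟨a, b, hab, hnadj, hau, hbu⟩ := hB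
    have hmin (w : V) := hu w (mem_univ w)
    obtain ⟨x, y, hxy, hnxy, hdeg⟩ := (le_total (H.degree a) (H.degree b)).elim
      (exists_not_adj_card_le_degree_add_of_min H F hr hF hHF hmin hab hnadj hau)
      (exists_not_adj_card_le_degree_add_of_min H F hr hF hHF hmin hab.symm
        (fun h ↦ hnadj h.symm) hbu)
    exact (hstuck x y hxy hnxy).not_ge hdeg
  · push Not at hB
    obtain ⟨w, hwu, hnadj⟩ : ∃ w, w ≠ u ∧ ¬H.Adj u w := by
      by_cases hau : a = u
      · exact ⟨b, hau ▸ hab.symm, hau ▸ hnadj⟩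
      · exact ⟨a, hau, fun h ↦ hnadj (hB a b hab hnadj hau ▸ h.symm)⟩
    have hw : Hᶜ.degree w ≤ 1 := by
      rw [← card_neighborFinset_eq_degree]
      refine card_le_one.mpr fun x hx y hy ↦ ?_
      rw [mem_neighborFinset, compl_adj] at hx hy
      rw [hB w x hx.1 hx.2 hwu, hB w y hy.1 hy.2 hwu]
    rw [degree_compl] at hw
    have := hstuck u w hwu.symm hnadj
    have := hHF u
    have := F.degree_le_card_edgeFinset u
    omega

end MissingEdges

theorem isHamiltonian_of_le_of_isRegularOfDegree [Nonempty V] {K : SimpleGraph V}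
    [DecidableRel K.Adj] [DecidableRel G.Adj] {r : ℕ} (hK : K.IsRegularOfDegree r) (hGK : G ≤ K)
    (hr : 2 * Fintype.card V ≤ 3 * r)
    (hG : Fintype.card V * r + 4 ≤ 2 * #G.edgeFinset + 2 * r) : G.IsHamiltonian := by
  have hKedges : Fintype.card V * r = 2 * #K.edgeFinset := by
    rw [← sum_degrees_eq_twice_card_edges]
    simp [hK.degree_eq]
  have hrV : r < Fintype.card V := hK.degree_eq (Classical.arbitrary V) ▸ K.degree_lt_card_verts _
  refine isHamiltonian_of_forall_exists_not_adj (by omega) fun H _ hGH hH ↦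
    exists_not_adj_card_le_degree_add H (K \ G) hr ?_ (fun w ↦ ?_) hH
  · -- not `rw [edgeFinset_sdiff]`: that lemma uses another `Fintype (K \ G).edgeSet` instance
    suffices #(K.edgeFinset \ G.edgeFinset) + 2 ≤ r by convert this using 3; ext; simp
    have := card_sdiff_add_card_eq_card (edgeFinset_mono hGK)
    omega
  have hsplit := degree_sdiff_add_degree hGK w
  rw [hK.degree_eq] at hsplit
  have := degree_le_of_le (v := w) hGH
  omega

end

theorem isRegularOfDegree_completeMultipartiteGraph (ι W : Type*) [Fintype ι] [DecidableEq ι]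
    [Fintype W] :
    (completeMultipartiteGraph fun _ : ι ↦ W).IsRegularOfDegree
      ((Fintype.card ι - 1) * Fintype.card W) := by
  intro v
  have : (completeMultipartiteGraph fun _ : ι ↦ W).neighborFinset v =
      (univ.erase v.1).sigma fun _ ↦ univ := by
    ext; simp [ne_comm]
  rw [← card_neighborFinset_eq_degree, this, card_sigma, sum_const,
    card_erase_of_mem (mem_univ _), smul_eq_mul, card_univ, card_univ]

end SimpleGraph

open SimpleGraph

/-- Theorem 14 / `ham`: Let `k ≥ 3` and `n ≥ 1` be integers. If `G` is a
balanced `k`-partite graph of order `p = kn` (i.e. a subgraph of the complete balanced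
`k`-partite graph `K_k(n)`) with at least `((k² − k)n² − 2n(k − 1) + 4)/2` edges,
then `G` is hamiltonian. -/
theorem balanced_kpartite_edges_hamiltonian
    (k n : ℕ) (hk : 3 ≤ k) (hn : 1 ≤ n)
    (G : SimpleGraph ((_ : Fin k) × Fin n))
    (hG : G ≤ completeMultipartiteGraph (fun _ : Fin k => Fin n))
    (hedges : ((k : ℤ) ^ 2 - k) * (n : ℤ) ^ 2 - 2 * (n : ℤ) * ((k : ℤ) - 1) + 4 ≤
      2 * (G.edgeSet.ncard : ℤ)) :
    G.IsHamiltonian := by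
  classical
  have : Nonempty ((_ : Fin k) × Fin n) := ⟨⟨⟨0, by omega⟩, ⟨0, by omega⟩⟩⟩
  have hcard : Fintype.card ((_ : Fin k) × Fin n) = k * n := by simp
  refine isHamiltonian_of_le_of_isRegularOfDegree
    (isRegularOfDegree_completeMultipartiteGraph (Fin k) (Fin n)) hG ?_ ?_
  · rw [hcard, Fintype.card_fin, Fintype.card_fin, Nat.sub_one_mul]
    have := Nat.mul_le_mul_right n hk
    omega
  · rw [← coe_edgeFinset, Set.ncard_coe_finset] at hedges
    rw [hcard, Fintype.card_fin, Fintype.card_fin]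
    zify [show 1 ≤ k by omega]
    linear_combination hedges
end

section
/- Let k ≥ 3 be an integer and let (n_1, …, n_k) be positive integers with n_1 ≥ n_2 ≥ … ≥ n_k, and set p = n_1 + … + n_k. Suppose p is even and n_1 = p/2. Then every k-partite graph G with part sizes (n_1, …, n_k) having at least (p/2)² − p/2 + 2 edges with an endpoint in the part V_1 of size n_1 is hamiltonian. -/
/-!
Let `X` be the part of size `m = p/2` and `Y` the union of the other parts, so `|Y| = m` too and
no edge lies inside `X`. The hypothesis says that at most `m - 2` pairs of `X × Y` are
non-adjacent. By induction on `m`, such a "nearly complete" balanced bipartite graph has a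
cycle `x₁ y₁ x₂ y₂ … x_m y_m` through all of `X ∪ Y`: few non-adjacent pairs force some `y ∈ Y`
adjacent to all of `X`; removing `y` together with an `x` carrying a non-adjacent pair (if any)
gives the same situation for `m - 1`, and `x` still has a neighbour `y'` on the smaller cycle, so
`x` and `y` are spliced in by replacing the edge `x' y'` of that cycle with the path `x' y x y'`.
-/

open Finset SimpleGraph

theorem Cycle.Chain.insert_between {α : Type*} {R : α → α → Prop} {a b : α} {l m : List α}
    (h : Chain R (a :: b :: l)) (hm : List.IsChain R (a :: m ++ [b])) :
    Chain R (a :: (m ++ b :: l)) := by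
  rw [chain_coe_cons] at h ⊢
  simpa using hm.append_overlap (l₂ := [b]) (by simpa using h.tail) (by simp)

theorem List.flatMap_pair_perm {α : Type*} (l : List (α × α)) :
    (l.flatMap fun p ↦ [p.1, p.2]).Perm (l.map Prod.fst ++ l.map Prod.snd) := by
  induction l with
  | nil => rfl
  | cons p l ih => exact ((ih.cons p.2).trans perm_middle.symm).cons p.1

theorem two_le_of_sum_eq_two_mul {ι : Type*} [Fintype ι] {f : ι → ℕ} (hf : ∀ i, 0 < f i)
    (hι : 3 ≤ Fintype.card ι) {i : ι} (h : ∑ j, f j = 2 * f i) : 2 ≤ f i := by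
  classical
  have hrest : #(univ.erase i) • 1 ≤ ∑ j ∈ univ.erase i, f j :=
    card_nsmul_le_sum _ _ 1 fun j _ ↦ hf j
  rw [card_erase_of_mem (mem_univ i), card_univ, smul_eq_mul, mul_one] at hrest
  rw [← add_sum_erase univ f (mem_univ i)] at h
  omega

namespace SimpleGraph

variable {V : Type*} {G : SimpleGraph V}

theorem isHamiltonian_of_chain_cycle [Fintype V] [DecidableEq V] {l : List V}
    (hl : (l : Multiset V) = (univ : Finset V).val) (h3 : 3 ≤ l.length)
    (hc : (l : Cycle V).Chain G.Adj) : G.IsHamiltonian := by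
  intro _
  obtain ⟨a, t, rfl⟩ := List.exists_cons_of_length_pos (by omega : 0 < l.length)
  have hnd : (a :: t).Nodup := by
    rw [← Multiset.coe_nodup, hl]
    exact (univ : Finset V).nodup
  have hmem (v : V) : v ∈ a :: t := by
    rw [← Multiset.mem_coe, hl]
    exact mem_univ v
  rw [Cycle.chain_coe_cons] at hc
  obtain ⟨w, hsupp⟩ : ∃ w : G.Walk a a, w.support = a :: (t ++ [a]) :=
    ⟨(Walk.ofSupport _ (List.cons_ne_nil _ _) hc).copy rfl (by simp),
      (Walk.support_copy _ _ _).trans (Walk.support_ofSupport _ _)⟩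
  have hnil : ¬w.Nil := by
    rw [Walk.nil_iff_support_eq, hsupp]
    simp
  have htail : w.tail.support = t ++ [a] := by
    rw [Walk.support_tail_of_not_nil _ hnil, hsupp, List.tail_cons]
  have hpath : w.tail.IsPath := by
    rw [Walk.isPath_def, htail, (List.perm_append_singleton a t).nodup_iff]
    exact hnd
  refine ⟨a, w, Walk.isCycle_iff_isPath_tail_and_le_length.mpr ⟨hpath, ?_⟩,
    hpath.isHamiltonian_of_mem fun v ↦ ?_⟩
  · have hlen := w.length_support
    rw [hsupp] at hlen
    simp only [List.length_cons, List.length_append, List.length_nil] at hlen h3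
    omega
  · rw [htail, (List.perm_append_singleton a t).mem_iff]
    exact hmem v

/-- `IsPairCycle G [(x₁, y₁), …, (xₖ, yₖ)]`: `x₁ y₁ x₂ y₂ … xₖ yₖ x₁` is a closed walk of `G`. -/
def IsPairCycle (G : SimpleGraph V) (l : List (V × V)) : Prop :=
  ((l.flatMap fun p ↦ [p.1, p.2] : List V) : Cycle V).Chain G.Adj

theorem isPairCycle_singleton {x y : V} (h : G.Adj x y) : IsPairCycle G [(x, y)] := by
  simp [IsPairCycle, h, h.symm]

theorem IsPairCycle.insert {l₁ l₂ : List (V × V)} {p : V × V} {x y : V}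
    (hl : IsPairCycle G (l₁ ++ p :: l₂)) (h₁ : G.Adj p.1 y) (h₂ : G.Adj y x)
    (h₃ : G.Adj x p.2) : IsPairCycle G (l₁ ++ (p.1, y) :: (x, p.2) :: l₂) := by
  simp only [IsPairCycle, List.flatMap_append, List.flatMap_cons] at hl ⊢
  rw [Cycle.coe_eq_coe.mpr List.isRotated_append] at hl ⊢
  simpa using hl.insert_between (m := [y, x]) (by simp [h₁, h₂, h₃])

theorem IsPairCycle.exists_extend [DecidableEq V] {X Y : Finset V} {x y y' : V}
    {l : List (V × V)} (hl : IsPairCycle G l) (hlX : (l.map Prod.fst : Multiset V) = (X.erase x).val)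
    (hlY : (l.map Prod.snd : Multiset V) = (Y.erase y).val) (hx : x ∈ X) (hy : y ∈ Y)
    (hyX : ∀ x' ∈ X, G.Adj x' y) (hy' : y' ∈ Y.erase y) (hxy' : G.Adj x y') :
    ∃ l' : List (V × V), (l'.map Prod.fst : Multiset V) = X.val ∧
      (l'.map Prod.snd : Multiset V) = Y.val ∧ IsPairCycle G l' := by
  obtain ⟨p, hp, rfl⟩ : ∃ p ∈ l, p.2 = y' := by
    have : y' ∈ (l.map Prod.snd : Multiset V) := by rw [hlY]; exact hy'
    simpa using this
  have hpX : p.1 ∈ X := by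
    have : p.1 ∈ (l.map Prod.fst : Multiset V) := by simpa using ⟨p.2, hp⟩
    rw [hlX] at this
    exact mem_of_mem_erase this
  obtain ⟨l₁, l₂, rfl⟩ := List.append_of_mem hp
  refine ⟨l₁ ++ (p.1, y) :: (x, p.2) :: l₂, ?_, ?_, hl.insert (hyX _ hpX) (hyX _ hx).symm hxy'⟩
  · rw [← Multiset.cons_erase hx, ← erase_val, ← hlX, Multiset.cons_coe, Multiset.coe_eq_coe]
    simpa using List.perm_middle (l₁ := l₁.map Prod.fst ++ [p.1])
  · rw [← Multiset.cons_erase hy, ← erase_val, ← hlY, Multiset.cons_coe, Multiset.coe_eq_coe]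
    simp

variable [DecidableRel G.Adj]

theorem card_nonadj_mono {X X' Y Y' : Finset V} (hX : X' ⊆ X) (hY : Y' ⊆ Y) :
    #{p ∈ X' ×ˢ Y' | ¬G.Adj p.1 p.2} ≤ #{p ∈ X ×ˢ Y | ¬G.Adj p.1 p.2} :=
  card_le_card (filter_subset_filter _ (product_subset_product hX hY))

theorem exists_forall_adj_of_card_nonadj_lt {X Y : Finset V}
    (h : #{p ∈ X ×ˢ Y | ¬G.Adj p.1 p.2} < #Y) : ∃ y ∈ Y, ∀ x ∈ X, G.Adj x y := by
  classical
  by_contra! hY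
  have : Y ⊆ {p ∈ X ×ˢ Y | ¬G.Adj p.1 p.2}.image Prod.snd := fun y hy ↦ by
    obtain ⟨x, hx, hxy⟩ := hY y hy
    exact mem_image.mpr ⟨(x, y), by simp [hx, hy, hxy], rfl⟩
  exact (card_le_card this |>.trans card_image_le).not_gt h

theorem exists_card_nonadj_erase_le [DecidableEq V] {X : Finset V} (hX : X.Nonempty)
    (Y : Finset V) (y : V) : ∃ x ∈ X,
      #{p ∈ X.erase x ×ˢ Y.erase y | ¬G.Adj p.1 p.2} ≤ #{p ∈ X ×ˢ Y | ¬G.Adj p.1 p.2} - 1 := by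
  rcases {p ∈ X ×ˢ Y | ¬G.Adj p.1 p.2}.eq_empty_or_nonempty with h | ⟨⟨x, y₀⟩, h⟩
  · obtain ⟨x, hx⟩ := hX
    have := card_nonadj_mono (G := G) (erase_subset x X) (erase_subset y Y)
    rw [h, card_empty] at this ⊢
    exact ⟨x, hx, this⟩
  · refine ⟨x, (mem_product.mp (mem_filter.mp h).1).1, ?_⟩
    rw [← card_erase_of_mem h]
    refine card_le_card fun q hq ↦ mem_erase.mpr ⟨fun hq' ↦ by simp [hq'] at hq, ?_⟩
    exact filter_subset_filter _ (product_subset_product (erase_subset x X) (erase_subset y Y)) hq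

theorem exists_isPairCycle_of_card_nonadj_le [DecidableEq V] {m : ℕ} (hm : 0 < m)
    {X Y : Finset V} (hX : #X = m) (hY : #Y = m)
    (hmiss : #{p ∈ X ×ˢ Y | ¬G.Adj p.1 p.2} ≤ m - 2) :
    ∃ l : List (V × V), (l.map Prod.fst : Multiset V) = X.val ∧
      (l.map Prod.snd : Multiset V) = Y.val ∧ IsPairCycle G l := by
  induction m, hm using Nat.le_induction generalizing X Y with
  | base =>
    -- for `m = 1` the truncated bound `m - 2 = 0` forces the only pair to be adjacent
    obtain ⟨x, rfl⟩ := card_eq_one.mp hX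
    obtain ⟨y, rfl⟩ := card_eq_one.mp hY
    obtain ⟨y', hy, hxy⟩ := exists_forall_adj_of_card_nonadj_lt (G := G) (X := {x}) (Y := {y})
      (by simp only [card_singleton]; omega)
    obtain rfl := mem_singleton.mp hy
    exact ⟨[(x, y')], rfl, rfl, isPairCycle_singleton (hxy x (mem_singleton_self x))⟩
  | succ m hm ih =>
    obtain ⟨y, hy, hyX⟩ :=
      exists_forall_adj_of_card_nonadj_lt (G := G) (X := X) (by omega : _ < #Y)
    obtain ⟨x, hx, hmiss'⟩ := exists_card_nonadj_erase_le (G := G) (X := X) (card_pos.mp (by omega)) Y y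
    obtain ⟨l, hlX, hlY, hl⟩ := ih (by rw [card_erase_of_mem hx, hX]; rfl)
      (by rw [card_erase_of_mem hy, hY]; rfl) (by omega)
    obtain ⟨y', hy', hxy'⟩ : ∃ y' ∈ Y.erase y, G.Adj x y' := by
      obtain ⟨y', hy', h⟩ := exists_forall_adj_of_card_nonadj_lt (G := G) (X := {x})
        (Y := Y.erase y) <| by
          have := card_nonadj_mono (G := G) (singleton_subset_iff.mpr hx) (erase_subset y Y)
          rw [card_erase_of_mem hy]
          omega
      exact ⟨y', hy', h x (mem_singleton_self x)⟩
    exact hl.exists_extend hlX hlY hx hy hyX hy' hxy'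

theorem isHamiltonian_of_card_interedges_ge [Fintype V] [DecidableEq V] {m : ℕ} (hm : 2 ≤ m)
    {X : Finset V} (hX : #X = m) (hXc : #Xᶜ = m)
    (hedges : m ^ 2 - m + 2 ≤ #(G.interedges X Xᶜ)) : G.IsHamiltonian := by
  have hmiss : #{p ∈ X ×ˢ Xᶜ | ¬G.Adj p.1 p.2} ≤ m - 2 := by
    have := card_filter_add_card_filter_not (s := X ×ˢ Xᶜ) fun p ↦ G.Adj p.1 p.2
    rw [card_product, hX, hXc, ← sq, ← interedges_def] at this
    omega
  obtain ⟨l, hlX, hlY, hl⟩ := exists_isPairCycle_of_card_nonadj_le (by omega) hX hXc hmiss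
  have hcover : ((l.flatMap fun p ↦ [p.1, p.2] : List V) : Multiset V) = univ.val := by
    rw [Multiset.coe_eq_coe.mpr l.flatMap_pair_perm, ← Multiset.coe_add, hlX, hlY,
      ← union_compl X, ← disjUnion_eq_union _ _ disjoint_compl_right]
    rfl
  refine isHamiltonian_of_chain_cycle hcover ?_ hl
  have hlen := congrArg Multiset.card hcover
  rw [Multiset.coe_card, card_val, card_univ, ← card_add_card_compl X] at hlen
  omega

theorem ncard_incident_edgeSet_eq_card_interedges_compl [Fintype V] [DecidableEq V]
    {X : Finset V} (hX : G.IsIndepSet X) :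
    {e ∈ G.edgeSet | ∃ v ∈ e, v ∈ X}.ncard = #(G.interedges X Xᶜ) := by
  have : {e ∈ G.edgeSet | ∃ v ∈ e, v ∈ X} = (G.interedges X Xᶜ).image fun p ↦ s(p.1, p.2) := by
    ext e
    constructor
    · rintro ⟨he, v, hv, hvX⟩
      obtain ⟨w, rfl⟩ := Sym2.mem_iff_exists.mp hv
      exact mem_image.mpr ⟨(v, w), (G.mk_mem_interedges_iff).mpr
        ⟨hvX, mem_compl.mpr fun hw ↦ hX hvX hw he.ne he, he⟩, rfl⟩
    · simp only [coe_image, Set.mem_image, mem_coe]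
      rintro ⟨⟨v, w⟩, hp, rfl⟩
      obtain ⟨hvX, -, hvw⟩ := (G.mk_mem_interedges_iff).mp hp
      exact ⟨hvw, v, Sym2.mem_mk_left v w, hvX⟩
  rw [this, Set.ncard_coe_finset, card_image_of_injOn]
  rintro ⟨a, b⟩ hab ⟨c, d⟩ hcd h
  obtain ⟨ha, -⟩ := (G.mk_mem_interedges_iff).mp hab
  obtain ⟨-, hd, -⟩ := (G.mk_mem_interedges_iff).mp hcd
  rcases Sym2.eq_iff.mp h with ⟨rfl, rfl⟩ | ⟨rfl, -⟩
  · rfl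
  · exact absurd ha (mem_compl.mp hd)

end SimpleGraph

/-- Theorem 19 / `evenhalfthm`: Let `k ≥ 3` and `(n 0, …, n (k-1))` be positive
integers with `n 0 ≥ … ≥ n (k-1)` and `p = ∑ n i`. If `p` is even and `n 0 = p/2`
(i.e. `p = 2 * n 0`), then every `k`-partite graph `G` with these part sizes having at least
`(p/2)² − p/2 + 2` edges with an endpoint in the part `V₁` of size `n 0` is hamiltonian. -/
theorem kpartite_edges_incident_largest_part_hamiltonian
    (k : ℕ) (hk : 3 ≤ k) (n : Fin k → ℕ) (hpos : ∀ i, 0 < n i)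
    (hp : ∑ i, n i = 2 * n ⟨0, by omega⟩)
    (G : SimpleGraph ((i : Fin k) × Fin (n i)))
    (hG : G ≤ completeMultipartiteGraph (fun i => Fin (n i)))
    (hedges : (n ⟨0, by omega⟩ : ℤ) ^ 2 - (n ⟨0, by omega⟩ : ℤ) + 2 ≤
      ({e ∈ G.edgeSet | ∃ v ∈ e, v.1 = (⟨0, by omega⟩ : Fin k)}.ncard : ℤ)) :
    G.IsHamiltonian := by
  classical
  set i₀ : Fin k := ⟨0, by omega⟩
  set X : Finset ((i : Fin k) × Fin (n i)) := {v | v.1 = i₀}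
  have hX : #X = n i₀ := by
    rw [card_filter, Fintype.sum_sigma]
    simp [apply_ite]
  have hXc : #Xᶜ = n i₀ := by
    rw [card_compl, hX, Fintype.card_sigma]
    simp only [Fintype.card_fin, hp]
    omega
  have hm : 2 ≤ n i₀ := two_le_of_sum_eq_two_mul hpos (by simpa using hk) hp
  have hind : G.IsIndepSet X := fun u hu v hv _ huv ↦ hG huv (by simp_all [X])
  refine isHamiltonian_of_card_interedges_ge hm hX hXc ?_
  rw [← ncard_incident_edgeSet_eq_card_interedges_compl hind]
  zify [Nat.le_self_pow two_ne_zero (n i₀)]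
  simpa [X] using hedges
end

section
/- For any integer a ≥ 5, let G be the 3-partite graph with part sizes (a, a − 2, 2) obtained from the complete 3-partite graph K(a, a − 2, 2) by choosing a − 2 vertices v_1, …, v_{a−2} in the part V_1 of size a and a vertex u in the part V_2 of size a − 2, and deleting the a − 2 edges v_i u for i = 1, …, a − 2. Then G is hamiltonian, G has at least (4 − 2p + 2n_1 + Σ n_i(p − n_i))/2 edges where p = 2a and (n_1, n_2, n_3) = (a, a − 2, 2), but G fails Pósa's condition: for r = a − 1 one has 1 ≤ r < p/2 and G has at least r vertices of degree at most r. -/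
open SimpleGraph

/-- The part (as an element of `Fin 3`) of a vertex of a tripartite vertex set. -/
def tripart {a b c : ℕ} : Fin a ⊕ Fin b ⊕ Fin c → Fin 3
  | Sum.inl _ => 0
  | Sum.inr (Sum.inl _) => 1
  | Sum.inr (Sum.inr _) => 2

/-- The complete tripartite graph `K(a, b, c)`: two vertices are adjacent iff they lie in
different parts. -/
def completeTripartite (a b c : ℕ) : SimpleGraph (Fin a ⊕ Fin b ⊕ Fin c) where
  Adj x y := tripart x ≠ tripart y
  symm := ⟨fun _ _ h => Ne.symm h⟩
  loopless := ⟨fun _ h => h rfl⟩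


/-! Every edge of `K(a, a - 2, 2)` missing from `G` joins `u` to some `vs i`. Hence `G` contains
all edges between `V₁` and `V₂ ∪ V₃` (both of size `a`) except those at `u`, and the two vertices
of `V₁` outside the range of `vs` can flank `u` on a cycle alternating between the two sides:
that cycle is Hamiltonian. Counting edges is exact, `|E(K(a, b, c))| = ab + bc + ca` with `a - 2`
of them deleted. Pósa's condition fails at `r = a - 1` because the `a - 2` vertices `vs i` have
degree `a - 1` and `u` has degree `4`. -/

open Sum

instance {a b c : ℕ} : DecidableRel (completeTripartite a b c).Adj :=
  fun x y => inferInstanceAs (Decidable (tripart x ≠ tripart y))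

theorem Fin.val_finRotate {n : ℕ} (i : Fin n) : (finRotate n i : ℕ) = (i + 1) % n := by
  have := i.neZero
  rw [finRotate_apply, Fin.val_add, Fin.val_one', Nat.add_mod_mod]

theorem finRotate_finProdFinEquiv_zero {n : ℕ} (i : Fin n) :
    finRotate (n * 2) (finProdFinEquiv (i, 0)) = finProdFinEquiv (i, 1) := by
  ext
  simp only [Fin.val_finRotate, finProdFinEquiv_apply_val, Fin.val_zero, Fin.val_one]
  rw [Nat.mod_eq_of_lt (by omega)]
  omega

theorem finRotate_finProdFinEquiv_one {n : ℕ} (i : Fin n) :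
    finRotate (n * 2) (finProdFinEquiv (i, 1)) = finProdFinEquiv (finRotate n i, 0) := by
  ext
  simp only [Fin.val_finRotate, finProdFinEquiv_apply_val, Fin.val_zero, Fin.val_one]
  rw [show 1 + 2 * (i : ℕ) + 1 = 2 * (i + 1) by ring, mul_comm n, Nat.mul_mod_mul_left]
  omega

namespace SimpleGraph

theorem isHamiltonian_of_adj_finRotate {V : Type*} [Fintype V] [DecidableEq V]
    {G : SimpleGraph V} {n : ℕ} (hn : 3 ≤ n) (f : Fin n ≃ V)
    (hf : ∀ k, G.Adj (f k) (f (finRotate n k))) : G.IsHamiltonian := by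
  obtain ⟨m, rfl⟩ : ∃ m, n = m + 3 := ⟨n - 3, by omega⟩
  have hhom : ∀ {u v}, (cycleGraph (m + 3)).Adj u v → G.Adj (f u) (f v) := by
    intro u v huv
    rcases cycleGraph_adj.1 huv with h | h
    · rw [sub_eq_iff_eq_add'] at h
      subst h
      simpa [add_comm, finRotate_apply] using (hf v).symm
    · rw [sub_eq_iff_eq_add'] at h
      subst h
      simpa [add_comm, finRotate_apply] using hf u
  obtain ⟨v, p, hp, hlen⟩ := (cycleGraph_isContained_iff (by omega)).1
    ⟨Hom.toCopy ⟨f, hhom⟩ f.injective⟩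
  intro _
  exact ⟨v, p, Walk.isHamiltonianCycle_iff_isCycle_and_length_eq.2
    ⟨hp, by rw [hlen, Fintype.card_congr f.symm, Fintype.card_fin]⟩⟩

variable {α β : Type*} [Fintype α] [Fintype β] [DecidableEq α] [DecidableEq β]
  {G : SimpleGraph (α ⊕ β)}

theorem isHamiltonian_of_alternating {n : ℕ} (hn : 2 ≤ n) (x : Fin n ≃ α) (y : Fin n ≃ β)
    (hxy : ∀ k, G.Adj (inl (x k)) (inr (y k)))
    (hyx : ∀ k, G.Adj (inr (y k)) (inl (x (finRotate n k)))) : G.IsHamiltonian := by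
  let P : Fin n × Fin 2 ≃ α ⊕ β := (Equiv.prodComm _ _).trans <|
    (finTwoEquiv.prodCongr (Equiv.refl _)).trans <|
      (Equiv.boolProdEquivSum _).trans (Equiv.sumCongr x y)
  refine isHamiltonian_of_adj_finRotate (by omega) (finProdFinEquiv.symm.trans P) ?_
  rw [← finProdFinEquiv.forall_congr_right, Prod.forall]
  refine fun i => Fin.forall_fin_two.2 ⟨?_, ?_⟩
  · simp only [Equiv.trans_apply, finRotate_finProdFinEquiv_zero, Equiv.symm_apply_apply]
    simpa [P, Equiv.boolProdEquivSum, finTwoEquiv] using hxy i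
  · simp only [Equiv.trans_apply, finRotate_finProdFinEquiv_one, Equiv.symm_apply_apply]
    simpa [P, Equiv.boolProdEquivSum, finTwoEquiv] using hyx i

theorem isHamiltonian_of_adj_inl_inr (hcard : Fintype.card α = Fintype.card β) {a₀ a₁ : α}
    (ha : a₀ ≠ a₁) {b₀ : β} (h₀ : G.Adj (inl a₀) (inr b₀)) (h₁ : G.Adj (inl a₁) (inr b₀))
    (hadj : ∀ a b, b ≠ b₀ → G.Adj (inl a) (inr b)) : G.IsHamiltonian := by
  obtain ⟨m, hm⟩ : ∃ m, Fintype.card α = m + 2 :=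
    ⟨Fintype.card α - 2, by have := Fintype.one_lt_card_iff.2 ⟨a₀, a₁, ha⟩; omega⟩
  let eα := (Fintype.equivFinOfCardEq hm).symm
  let eβ := (Fintype.equivFinOfCardEq (hcard ▸ hm)).symm
  obtain ⟨σ, hσ⟩ := Equiv.Perm.exists_extending_pair (eα ∘ ![0, 1]) ![a₀, a₁]
    (eα.injective.comp (by simp [Function.Injective, Fin.forall_fin_two]))
    (by simp [Function.Injective, Fin.forall_fin_two, ha, ha.symm])
  -- the cycle will pass through `a₀, b₀, a₁` in this order
  let x := eα.trans σ
  let y := eβ.trans (Equiv.swap (eβ 0) b₀)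
  have hx₀ : x 0 = a₀ := hσ 0
  have hx₁ : x 1 = a₁ := hσ 1
  have hy : ∀ k, y k = b₀ → k = 0 := fun k hk =>
    y.injective (hk.trans (Equiv.swap_apply_left _ _).symm)
  refine isHamiltonian_of_alternating (by omega) x y (fun k => ?_) (fun k => ?_)
  · by_cases hk : y k = b₀
    · rwa [hk, hy k hk, hx₀]
    · exact hadj _ _ hk
  · by_cases hk : y k = b₀
    · rw [hk, hy k hk, finRotate_apply, zero_add, hx₁]
      exact h₁.symm
    · exact (hadj _ _ hk).symm

end SimpleGraph

theorem completeTripartite_adj {a b c : ℕ} {x y : Fin a ⊕ Fin b ⊕ Fin c} :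
    (completeTripartite a b c).Adj x y ↔ tripart x ≠ tripart y := Iff.rfl

theorem completeTripartite_adj_inl_inr {a b c : ℕ} (x : Fin a) (y : Fin b ⊕ Fin c) :
    (completeTripartite a b c).Adj (inl x) (inr y) := by
  rcases y with y | y <;> simp [completeTripartite_adj, tripart]

open Finset in
theorem card_edgeFinset_completeTripartite (a b c : ℕ) :
    #(completeTripartite a b c).edgeFinset = a * b + b * c + c * a := by
  have h : a * (b + c) + (b * (a + c) + c * (a + b)) =
      2 * #(completeTripartite a b c).edgeFinset := by
    simpa [degree, neighborFinset_eq_filter, card_filter, Fintype.sum_sum_type,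
      completeTripartite_adj, tripart] using
      sum_degrees_eq_twice_card_edges (completeTripartite a b c)
  linarith

def starEdges {a b c : ℕ} {ι : Type*} (vs : ι → Fin a) (u : Fin b) :
    Set (Sym2 (Fin a ⊕ Fin b ⊕ Fin c)) :=
  {e | ∃ i, e = s(inl (vs i), inr (inl u))}

section StarEdges

variable {a b c : ℕ} {ι : Type*} {vs : ι → Fin a} {u : Fin b}

theorem mk_mem_starEdges_iff {x : Fin a} {y : Fin b ⊕ Fin c} :
    s(inl x, inr y) ∈ starEdges vs u ↔ y = inl u ∧ x ∈ Set.range vs := by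
  simp [starEdges, eq_comm, and_comm]

theorem starEdges_subset_edgeSet :
    starEdges (c := c) vs u ⊆ (completeTripartite a b c).edgeSet := by
  rintro _ ⟨i, rfl⟩
  exact completeTripartite_adj_inl_inr _ _

theorem ncard_starEdges (hvs : Function.Injective vs) :
    (starEdges (c := c) vs u).ncard = Nat.card ι := by
  have : starEdges (c := c) vs u = Set.range fun i => s(inl (vs i), inr (inl u)) := by
    ext; simp [starEdges, eq_comm]
  rw [this, Set.ncard_range_of_injective]
  intro i j hij
  exact hvs (by simpa using hij)

theorem ncard_edgeSet_deleteEdges_starEdges_add (hvs : Function.Injective vs) :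
    ((completeTripartite a b c).deleteEdges (starEdges vs u)).edgeSet.ncard + Nat.card ι =
      a * b + b * c + c * a := by
  rw [edgeSet_deleteEdges, ← ncard_starEdges hvs,
    Set.ncard_sdiff_add_ncard_of_subset starEdges_subset_edgeSet,
    ← card_edgeFinset_completeTripartite, ← Set.ncard_coe_finset, coe_edgeFinset]

theorem deleteEdges_starEdges_adj_inl_inr {x : Fin a} {y : Fin b ⊕ Fin c} :
    ((completeTripartite a b c).deleteEdges (starEdges vs u)).Adj (inl x) (inr y) ↔
      (y = inl u → x ∉ Set.range vs) := by
  rw [deleteEdges_adj, mk_mem_starEdges_iff, and_iff_right (completeTripartite_adj_inl_inr x y),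
    not_and]

theorem neighborSet_deleteEdges_starEdges_inl {x : Fin a} (hx : x ∈ Set.range vs) :
    ((completeTripartite a b c).deleteEdges (starEdges vs u)).neighborSet (inl x) =
      inr '' {inl u}ᶜ := by
  ext (w | w)
  · simp [deleteEdges_adj, completeTripartite_adj, tripart]
  · rw [mem_neighborSet, deleteEdges_starEdges_adj_inl_inr]
    simp [hx]

theorem neighborSet_deleteEdges_starEdges_center_subset :
    ((completeTripartite a b c).deleteEdges (starEdges vs u)).neighborSet (inr (inl u)) ⊆
      inl '' (Set.range vs)ᶜ ∪ Set.range (inr ∘ inr) := by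
  rintro (w | w | w) hw
  · rw [mem_neighborSet, adj_comm, deleteEdges_starEdges_adj_inl_inr] at hw
    exact Or.inl ⟨w, hw rfl, rfl⟩
  · simp [deleteEdges_adj, completeTripartite_adj, tripart] at hw
  · exact Or.inr ⟨w, rfl⟩

theorem card_add_one_le_ncard_setOf_ncard_neighborSet_le (hvs : Function.Injective vs)
    {r : ℕ} (hr₁ : b + c - 1 ≤ r) (hr₂ : a - Nat.card ι + c ≤ r) :
    Nat.card ι + 1 ≤ {x | (((completeTripartite a b c).deleteEdges (starEdges vs u)).neighborSet
      x).ncard ≤ r}.ncard := by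
  set G := (completeTripartite a b c).deleteEdges (starEdges vs u)
  have hleaves : Set.range (inl ∘ vs) ⊆ {x | (G.neighborSet x).ncard ≤ r} := by
    rintro _ ⟨i, rfl⟩
    rw [Set.mem_ofPred_eq, Function.comp_apply, neighborSet_deleteEdges_starEdges_inl ⟨i, rfl⟩,
      Set.ncard_image_of_injective _ inr_injective, Set.ncard_compl, Set.ncard_singleton]
    simpa using hr₁
  have hcenter : (G.neighborSet (inr (inl u))).ncard ≤ r := calc
    _ ≤ (inl '' (Set.range vs)ᶜ ∪ Set.range (inr ∘ inr (α := Fin b))).ncard :=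
      Set.ncard_le_ncard neighborSet_deleteEdges_starEdges_center_subset
    _ ≤ (inl '' (Set.range vs)ᶜ).ncard + (Set.range (inr ∘ inr (α := Fin b))).ncard :=
      Set.ncard_union_le _ _
    _ = a - Nat.card ι + c := by
      rw [Set.ncard_image_of_injective _ inl_injective, Set.ncard_compl,
        Set.ncard_range_of_injective hvs,
        Set.ncard_range_of_injective (inr_injective.comp inr_injective)]
      simp
    _ ≤ r := hr₂
  calc Nat.card ι + 1 = (Set.range (inl ∘ vs) ∪ {inr (inl u)}).ncard := by
        rw [Set.ncard_union_eq (by simp), Set.ncard_range_of_injective (inl_injective.comp hvs),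
          Set.ncard_singleton]
    _ ≤ _ := Set.ncard_le_ncard (Set.union_subset hleaves (by simpa using hcenter))

theorem isHamiltonian_deleteEdges_starEdges [Finite ι] (habc : a = b + c)
    (hι : Nat.card ι + 2 ≤ a) :
    ((completeTripartite a b c).deleteEdges (starEdges vs u)).IsHamiltonian := by
  obtain ⟨a₀, a₁, h₀, h₁, hne⟩ : ∃ a₀ a₁, a₀ ∉ Set.range vs ∧ a₁ ∉ Set.range vs ∧ a₀ ≠ a₁ := by
    refine (Set.one_lt_ncard_iff (s := (Set.range vs)ᶜ)).1 ?_
    have : (Set.range vs).ncard ≤ Nat.card ι := by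
      rw [← Set.image_univ, ← Set.ncard_univ]
      exact Set.ncard_image_le
    rw [Set.ncard_compl, Nat.card_fin]
    omega
  refine isHamiltonian_of_adj_inl_inr (by simp [habc]) hne (b₀ := inl u) ?_ ?_ fun x y hy => ?_
    <;> rw [deleteEdges_starEdges_adj_inl_inr]
  exacts [fun _ => h₀, fun _ => h₁, fun h => absurd h hy]

end StarEdges

/-- Remark, family 1, `p` even and `n₁ = p/2`: For `a ≥ 5`, let `G` be
obtained from `K(a, a−2, 2)` by choosing `a − 2` distinct vertices `vs 0, …, vs (a−3)` in the
part `V₁` of size `a` and a vertex `u` in the part `V₂` of size `a − 2`, and deleting the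
`a − 2` edges `(vs i)u`. Then `G` is hamiltonian, `G` has at least
`(4 − 2p + 2n₁ + Σᵢ nᵢ(p − nᵢ))/2` edges where `p = 2a` and `(n₁, n₂, n₃) = (a, a−2, 2)`,
but `G` fails Pósa's condition: for `r = a − 1` one has `1 ≤ r < p/2` and `G` has at least `r`
vertices of degree at most `r`. -/
theorem tripartite_posa_fail_even_half
    (a : ℕ) (ha : 5 ≤ a)
    (vs : Fin (a - 2) → Fin a) (hinj : Function.Injective vs)
    (u : Fin (a - 2))
    (G : SimpleGraph (Fin a ⊕ Fin (a - 2) ⊕ Fin 2))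
    (hGdef : G = (completeTripartite a (a - 2) 2).deleteEdges
      {e | ∃ i, e = s(Sum.inl (vs i), Sum.inr (Sum.inl u))}) :
    G.IsHamiltonian ∧
      (4 - 2 * (2 * (a : ℤ)) + 2 * (a : ℤ) +
          ((a : ℤ) * (2 * (a : ℤ) - a) + ((a : ℤ) - 2) * (2 * (a : ℤ) - ((a : ℤ) - 2)) +
            2 * (2 * (a : ℤ) - 2)) ≤ 2 * (G.edgeSet.ncard : ℤ)) ∧
      (1 ≤ a - 1 ∧ 2 * (a - 1) < 2 * a ∧
        a - 1 ≤ {x | (G.neighborSet x).ncard ≤ a - 1}.ncard) := by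
  obtain rfl : G = (completeTripartite a (a - 2) 2).deleteEdges (starEdges vs u) := hGdef
  have hedges := ncard_edgeSet_deleteEdges_starEdges_add (c := 2) (u := u) hinj
  rw [Nat.card_fin] at hedges
  refine ⟨isHamiltonian_deleteEdges_starEdges (by omega) (by rw [Nat.card_fin]; omega), ?_,
    by omega, by omega, ?_⟩
  · have h2 : 2 ≤ a := by omega
    zify [h2] at hedges
    linarith
  · calc a - 1 ≤ Nat.card (Fin (a - 2)) + 1 := by rw [Nat.card_fin]; omega
      _ ≤ _ := card_add_one_le_ncard_setOf_ncard_neighborSet_le hinj (by omega)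
        (by rw [Nat.card_fin]; omega)
end
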